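/- In PSL(2,ℂ), the element m∞0 · (y · m∞2 · y⁻¹) has order 5 (i.e., the product of the parabolic fixing ∞ with translation length 1 and the conjugate by y of the parabolic with translation ω² is elliptic of order 5). -/

import Mathlib

/-!
Setup: `PSL(2,ℂ)` as the quotient of `SL(2,ℂ)` by its center, the constants
`u = (1+√5)/2`, `ω = (1+√(-3))/2 = (1+√3·i)/2`, and the generators of the
tetrahedral groups of Neumann–Reid.
-/

noncomputable section

abbrev SL2C := Matrix.SpecialLinearGroup (Fin 2) ℂ

/-- `PSL(2,ℂ)`, the quotient of `SL(2,ℂ)` by its center `{±I}`. -/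
abbrev PSL2C := SL2C ⧸ Subgroup.center SL2C

/-- The projection `SL(2,ℂ) → PSL(2,ℂ)`, `A ↦ [A]`. -/
def pr : SL2C →* PSL2C := QuotientGroup.mk' _

def u : ℂ := ((1 + Real.sqrt 5) / 2 : ℝ)
def ω : ℂ := (1 + Real.sqrt 3 * Complex.I) / 2

lemma u_ne : u ≠ 0 := Complex.ofReal_ne_zero.mpr (by positivity)

lemma ω_ne : ω ≠ 0 := by
  unfold ω
  intro h
  rw [div_eq_zero_iff] at h
  rcases h with h | h
  · have := congrArg Complex.re h
    simp at this
  · norm_num at h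

def ySL : SL2C := ⟨!![0, ω * u⁻¹; -ω⁻¹ * u, 0], by
  rw [Matrix.det_fin_two_of]; field_simp [u_ne, ω_ne]; ring⟩

def y : PSL2C := pr ySL

def minf0 : PSL2C := pr ⟨!![1, 1; 0, 1], by simp [Matrix.det_fin_two_of]⟩
def minf1 : PSL2C := pr ⟨!![1, ω; 0, 1], by simp [Matrix.det_fin_two_of]⟩
def minf2 : PSL2C := pr ⟨!![1, ω ^ 2; 0, 1], by simp [Matrix.det_fin_two_of]⟩

/-!
Conjugation by `y` turns `m∞2` into the lower triangular parabolic `[[1, 0], [-u², 1]]`, so the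
product lifts to a matrix of `SL(2,ℂ)` of trace `2 - u² = 1 - u = ψ`, the Galois conjugate of the
golden ratio. By Cayley–Hamilton, a `2 × 2` matrix of determinant one whose trace `t` satisfies
`t² = t + 1` has fifth power `-1`, which is central; and it is not central itself, since the
central elements `±1` have trace `±2`.
-/

namespace Matrix

variable {R : Type*} [CommRing R]

theorem sq_eq_trace_smul_sub_det_smul_one (A : Matrix (Fin 2) (Fin 2) R) :
    A ^ 2 = A.trace • A - A.det • 1 := by
  ext i j
  fin_cases i <;> fin_cases j <;> simp [sq, mul_apply, trace_fin_two, det_fin_two] <;> ring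

theorem pow_five_eq_neg_one_of_trace_sq {A : Matrix (Fin 2) (Fin 2) R} (hdet : A.det = 1)
    (htr : A.trace ^ 2 = A.trace + 1) : A ^ 5 = -1 := by
  set t := A.trace
  have h2 : A ^ 2 = t • A - 1 := by simpa [hdet] using sq_eq_trace_smul_sub_det_smul_one A
  have h3 : A ^ 3 = t • A - t • 1 := by
    rw [pow_succ, h2, sub_mul, smul_mul_assoc, ← sq, h2, one_mul]
    linear_combination (norm := module) htr • A
  have h4 : A ^ 4 = A - t • 1 := by
    rw [pow_succ, h3, sub_mul, smul_mul_assoc, ← sq, h2, smul_mul_assoc, one_mul]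
    linear_combination (norm := module) htr • A
  rw [pow_succ, h4, sub_mul, smul_mul_assoc, ← sq, h2, one_mul]
  module

theorem trace_unipotent_mul_conj_unipotent (a b s t : R) :
    trace (!![1, s; 0, 1] * (!![0, a; b, 0] * !![1, t; 0, 1] * adjugate !![0, a; b, 0])) =
      -2 * a * b - s * t * b ^ 2 := by
  rw [adjugate_fin_two_of, mul_fin_two, mul_fin_two, mul_fin_two, trace_fin_two]
  simp only [of_apply, cons_val_zero, cons_val_one, cons_val', cons_val_fin_one]
  ring

end Matrix

namespace Matrix.SpecialLinearGroup

def upperUnipotent {R : Type*} [CommRing R] (t : R) : SpecialLinearGroup (Fin 2) R :=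
  ⟨!![1, t; 0, 1], by simp [det_fin_two_of]⟩

theorem orderOf_mk_center_eq_five_of_trace_sq {K : Type*} [Field K] [CharZero K]
    (A : SpecialLinearGroup (Fin 2) K)
    (htr : trace (A : Matrix (Fin 2) (Fin 2) K) ^ 2 = trace (A : Matrix (Fin 2) (Fin 2) K) + 1) :
    orderOf (A : SpecialLinearGroup (Fin 2) K ⧸ Subgroup.center _) = 5 := by
  refine orderOf_eq_prime (hp := ⟨Nat.prime_five⟩) ?_ ?_
  · have hA5 : A ^ 5 = -1 :=
      Subtype.ext (by simpa using pow_five_eq_neg_one_of_trace_sq A.property htr)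
    rw [← QuotientGroup.mk_pow, QuotientGroup.eq_one_iff, hA5, mem_center_iff]
    exact ⟨-1, by norm_num, by rw [coe_neg, coe_one, map_neg, map_one]⟩
  · rw [Ne, QuotientGroup.eq_one_iff, mem_center_iff]
    rintro ⟨r, hr, hrA⟩
    rw [← hrA] at htr
    simp only [scalar_apply, trace_diagonal, Finset.sum_const, Finset.card_univ, Fintype.card_fin,
      nsmul_eq_mul, Nat.cast_ofNat, sq_eq_one_iff] at htr hr
    rcases hr with rfl | rfl <;> norm_num at htr

end Matrix.SpecialLinearGroup

open Matrix Matrix.SpecialLinearGroup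

lemma u_sq : u ^ 2 = u + 1 := by
  rw [u]
  exact_mod_cast Real.goldenRatio_sq

lemma trace_minf0_mul_conj_minf2 :
    trace ((upperUnipotent 1 * (ySL * upperUnipotent (ω ^ 2) * ySL⁻¹) : SL2C) :
      Matrix (Fin 2) (Fin 2) ℂ) = (Real.goldenConj : ℂ) := by
  rw [coe_mul, coe_mul, coe_mul, coe_inv]
  refine (trace_unipotent_mul_conj_unipotent (ω * u⁻¹) (-ω⁻¹ * u) 1 (ω ^ 2)).trans ?_
  rw [← Real.one_sub_goldenConj, Complex.ofReal_sub, Complex.ofReal_one]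
  change _ = 1 - u -- `u` is the golden ratio `φ`, cast to `ℂ`
  field_simp [ω_ne, u_ne]
  linear_combination -u_sq

/-- `m∞0 · (y · m∞2 · y⁻¹)` is elliptic of order 5. -/
theorem stmt6 : orderOf (minf0 * (y * minf2 * y⁻¹)) = 5 := by
  change orderOf (pr (upperUnipotent 1 * (ySL * upperUnipotent (ω ^ 2) * ySL⁻¹))) = 5
  refine orderOf_mk_center_eq_five_of_trace_sq _ ?_
  rw [trace_minf0_mul_conj_minf2]
  exact_mod_cast Real.goldenConj_sq
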